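/- Fix an unsatisfiable CNF formula F with n variables and integers w, s ≥ 1 with 2^n ≥ s ≥ 6nw, with blocks, t, 𝓗, ∂, conditions and the partial assignments α(p) as defined. If p is a condition and C is a clause of REF(F,s), then C↾α(p) ≠ 0; that is, α(p) does not falsify any clause of REF(F,s). -/

import Mathlib

/-! ## Clauses, CNFs and Resolution -/

/-- A clause over variables of type `α`: a finite set of literals `(x, b)`,
where `(x, true)` is the positive literal `X` and `(x, false)` is `¬X`. -/
abbrev Clause (α : Type) := Finset (α × Bool)

/-- A clause is non-tautological if it contains no variable together with its negation. -/
def Clause.Nontaut {α : Type} (C : Clause α) : Prop :=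
  ∀ x : α, ¬((x, true) ∈ C ∧ (x, false) ∈ C)

/-- A Resolution refutation of the set of clauses `F`: a nonempty sequence of
non-tautological clauses, each of which is a weakening (i.e. a superset) of a clause
of `F`, or a weakening of a resolvent `(D_v ∖ {X}) ∪ (D_w ∖ {¬X})` of two earlier
clauses `D_v, D_w` with `X ∈ D_v` and `¬X ∈ D_w`; the last clause is empty.
The length of the refutation is the length of the list. -/
def IsResRefutation {α : Type} [DecidableEq α] (F : Set (Clause α)) (P : List (Clause α)) : Prop :=
  P ≠ [] ∧
  (∀ u : Fin P.length,
      Clause.Nontaut (P.get u) ∧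
      ((∃ C ∈ F, C ⊆ P.get u) ∨
        ∃ v w : Fin P.length, (v : ℕ) < (u : ℕ) ∧ (w : ℕ) < (u : ℕ) ∧ ∃ x : α,
          (x, true) ∈ P.get v ∧ (x, false) ∈ P.get w ∧
          ((P.get v).erase (x, true) ∪ (P.get w).erase (x, false)) ⊆ P.get u)) ∧
  P.getLast? = some (∅ : Clause α)

/-- Satisfiability of a set of clauses. -/
def CnfSat {α : Type} (S : Set (Clause α)) : Prop :=
  ∃ a : α → Bool, ∀ C ∈ S, ∃ l ∈ C, a l.1 = l.2

/-- The size of a CNF: the sum of the sizes (numbers of literals) of its clauses. -/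
noncomputable def cnfSize {α : Type} (S : Set (Clause α)) : ℕ :=
  ∑ᶠ C ∈ S, Finset.card C

/-! ## Restrictions (partial assignments) -/

/-- The restriction (partial assignment) `ρ` satisfies the clause `C` (i.e. `C↾ρ = 1`). -/
def Clause.SatByR {α : Type} (ρ : α → Option Bool) (C : Clause α) : Prop :=
  ∃ l ∈ C, ρ l.1 = some l.2

/-- The restriction `ρ` falsifies the clause `C` (i.e. `C↾ρ = 0`). -/
def Clause.FalsByR {α : Type} (ρ : α → Option Bool) (C : Clause α) : Prop :=
  ∀ l ∈ C, ρ l.1 = some (!l.2)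

/-- The clause `C↾ρ` (relevant when `C` is neither satisfied nor falsified):
remove from `C` all falsified literals. -/
def Clause.restrictBy {α : Type} [DecidableEq α] (ρ : α → Option Bool) (C : Clause α) :
    Clause α :=
  C.filter (fun l => ρ l.1 ≠ some (!l.2))

/-- `F↾ρ` for a set of clauses `F`: it contains `C↾ρ` for those `C ∈ F` neither satisfied
nor falsified by `ρ`, together with the empty clause if some `C ∈ F` is falsified by `ρ`. -/
def cnfRestrict {α : Type} [DecidableEq α] (ρ : α → Option Bool) (S : Set (Clause α)) :
    Set (Clause α) :=
  { E | ∃ C ∈ S, ¬Clause.SatByR ρ C ∧ ¬Clause.FalsByR ρ C ∧ E = Clause.restrictBy ρ C } ∪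
  { E | E = (∅ : Clause α) ∧ ∃ C ∈ S, Clause.FalsByR ρ C }

open scoped Classical in
/-- `Π↾ρ` for a sequence of clauses: remove the satisfied clauses (the `1`s) and replace
the falsified ones (the `0`s) by the empty clause. -/
noncomputable def seqRestrict {α : Type} [DecidableEq α] (ρ : α → Option Bool)
    (P : List (Clause α)) : List (Clause α) :=
  (P.filter (fun C => decide (¬Clause.SatByR ρ C))).map
    (fun C => if Clause.FalsByR ρ C then (∅ : Clause α) else Clause.restrictBy ρ C)

/-- The partial assignment `σ` extends the partial assignment `ρ`. -/
def optExtends {α : Type} (ρ σ : α → Option Bool) : Prop :=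
  ∀ x b, ρ x = some b → σ x = some b

/-! ## CNFs with an explicit enumeration of clauses -/

/-- A CNF formula with variables `X_1, …, X_n` (indices in `Finset.Icc 1 n`) given with an
explicit enumeration `Cl 1, …, Cl m` of its clauses. -/
structure CNFFam where
  n : ℕ
  m : ℕ
  Cl : ℕ → Clause ℕ

namespace CNFFam

/-- Well-formedness: the clauses `C_1, …, C_m` are non-tautological, pairwise distinct
(they enumerate a set of clauses), and use only the variables `X_1, …, X_n`. -/
def WF (F : CNFFam) : Prop :=
  (∀ j ∈ Finset.Icc 1 F.m, Clause.Nontaut (F.Cl j) ∧ ∀ l ∈ F.Cl j, l.1 ∈ Finset.Icc 1 F.n) ∧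
  (∀ j ∈ Finset.Icc 1 F.m, ∀ j' ∈ Finset.Icc 1 F.m, F.Cl j = F.Cl j' → j = j')

/-- The underlying set of clauses. -/
def clauseSet (F : CNFFam) : Set (Clause ℕ) :=
  { C | ∃ j ∈ Finset.Icc 1 F.m, C = F.Cl j }

/-- `F` is satisfiable. -/
def Sat (F : CNFFam) : Prop := CnfSat F.clauseSet

/-- `F` is a 3-CNF: all clauses have size at most 3. -/
def Is3CNF (F : CNFFam) : Prop := ∀ j ∈ Finset.Icc 1 F.m, (F.Cl j).card ≤ 3

end CNFFam

/-! ## The variables of the formulas REF and RREF -/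

/-- The propositional variables of `REF(F,s)` and `RREF(F,s)`. -/
inductive RefVar : Type where
  | D (u i : ℕ) (b : Bool)
  | V (u i : ℕ)
  | I (u j : ℕ)
  | L (u v : ℕ)
  | R (u v : ℕ)
  | P (u : ℕ)
deriving DecidableEq

abbrev VClause := Clause RefVar

/-- The index mentioned by a variable: `D[u,i,b], V[u,i], I[u,j], L[u,v], R[u,v], P[u]`
all mention the index `u`. -/
def RefVar.idx : RefVar → ℕ
  | .D u _ _ => u
  | .V u _ => u
  | .I u _ => u
  | .L u _ => u
  | .R u _ => u
  | .P u => u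

/-- The positive literal on a variable. -/
def pLit (x : RefVar) : RefVar × Bool := (x, true)

/-- The negative literal on a variable. -/
def nLit (x : RefVar) : RefVar × Bool := (x, false)

/-- The index-width of a clause: the number of indices mentioned by its variables. -/
def idxWidth (C : VClause) : ℕ := (C.image (fun l => RefVar.idx l.1)).card

/-! ## The clauses of REF and RREF -/

namespace Ref

/-- (A1) `V[u,0] ∨ V[u,1] ∨ ⋯ ∨ V[u,n]`. -/
def A1 (F : CNFFam) (A : Finset ℕ) : Set VClause :=
  { C | ∃ u ∈ A, C = (Finset.range (F.n + 1)).image (fun i => pLit (.V u i)) }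

/-- (A2) `I[u,0] ∨ I[u,1] ∨ ⋯ ∨ I[u,m]`. -/
def A2 (F : CNFFam) (A : Finset ℕ) : Set VClause :=
  { C | ∃ u ∈ A, C = (Finset.range (F.m + 1)).image (fun j => pLit (.I u j)) }

/-- (A3) `L[u,0] ∨ L[u,1] ∨ ⋯ ∨ L[u,s]` (disjunction over the index set and 0). -/
def A3 (A : Finset ℕ) : Set VClause :=
  { C | ∃ u ∈ A, C = (insert 0 A).image (fun v => pLit (.L u v)) }

/-- (A4) `R[u,0] ∨ R[u,1] ∨ ⋯ ∨ R[u,s]`. -/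
def A4 (A : Finset ℕ) : Set VClause :=
  { C | ∃ u ∈ A, C = (insert 0 A).image (fun v => pLit (.R u v)) }

/-- (A5) `¬V[u,i] ∨ ¬V[u,i']`, `i ≠ i'`. -/
def A5 (F : CNFFam) (A : Finset ℕ) : Set VClause :=
  { C | ∃ u ∈ A, ∃ i ∈ Finset.range (F.n + 1), ∃ i' ∈ Finset.range (F.n + 1),
      i ≠ i' ∧ C = {nLit (.V u i), nLit (.V u i')} }

/-- (A6) `¬I[u,j] ∨ ¬I[u,j']`, `j ≠ j'`. -/
def A6 (F : CNFFam) (A : Finset ℕ) : Set VClause :=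
  { C | ∃ u ∈ A, ∃ j ∈ Finset.range (F.m + 1), ∃ j' ∈ Finset.range (F.m + 1),
      j ≠ j' ∧ C = {nLit (.I u j), nLit (.I u j')} }

/-- (A7) `¬L[u,v] ∨ ¬L[u,v']`, `v ≠ v'`. -/
def A7 (A : Finset ℕ) : Set VClause :=
  { C | ∃ u ∈ A, ∃ v ∈ insert 0 A, ∃ v' ∈ insert 0 A,
      v ≠ v' ∧ C = {nLit (.L u v), nLit (.L u v')} }

/-- (A8) `¬R[u,v] ∨ ¬R[u,v']`, `v ≠ v'`. -/
def A8 (A : Finset ℕ) : Set VClause :=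
  { C | ∃ u ∈ A, ∃ v ∈ insert 0 A, ∃ v' ∈ insert 0 A,
      v ≠ v' ∧ C = {nLit (.R u v), nLit (.R u v')} }

/-- (A9) `¬I[u,0] ∨ ¬V[u,0]`. -/
def A9 (A : Finset ℕ) : Set VClause := { C | ∃ u ∈ A, C = {nLit (.I u 0), nLit (.V u 0)} }

/-- (A10) `I[u,0] ∨ V[u,0]`. -/
def A10 (A : Finset ℕ) : Set VClause := { C | ∃ u ∈ A, C = {pLit (.I u 0), pLit (.V u 0)} }

/-- (A11) `¬I[u,0] ∨ ¬L[u,0]`. -/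
def A11 (A : Finset ℕ) : Set VClause := { C | ∃ u ∈ A, C = {nLit (.I u 0), nLit (.L u 0)} }

/-- (A12) `¬I[u,0] ∨ ¬R[u,0]`. -/
def A12 (A : Finset ℕ) : Set VClause := { C | ∃ u ∈ A, C = {nLit (.I u 0), nLit (.R u 0)} }

/-- (A13) `¬L[u,v]` for `u ≤ v`. -/
def A13 (A : Finset ℕ) : Set VClause :=
  { C | ∃ u ∈ A, ∃ v ∈ A, u ≤ v ∧ C = {nLit (.L u v)} }

/-- (A14) `¬R[u,v]` for `u ≤ v`. -/
def A14 (A : Finset ℕ) : Set VClause :=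
  { C | ∃ u ∈ A, ∃ v ∈ A, u ≤ v ∧ C = {nLit (.R u v)} }

/-- (A15) `¬L[u,v] ∨ ¬V[u,i] ∨ D[v,i,0]`. -/
def A15 (F : CNFFam) (A : Finset ℕ) : Set VClause :=
  { C | ∃ u ∈ A, ∃ v ∈ A, ∃ i ∈ Finset.Icc 1 F.n,
      C = {nLit (.L u v), nLit (.V u i), pLit (.D v i false)} }

/-- (A16) `¬R[u,v] ∨ ¬V[u,i] ∨ D[v,i,1]`. -/
def A16 (F : CNFFam) (A : Finset ℕ) : Set VClause :=
  { C | ∃ u ∈ A, ∃ v ∈ A, ∃ i ∈ Finset.Icc 1 F.n,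
      C = {nLit (.R u v), nLit (.V u i), pLit (.D v i true)} }

/-- (A17) `¬L[u,v] ∨ ¬V[u,i] ∨ ¬D[v,i',b] ∨ D[u,i',b]`, `i' ≠ i`. -/
def A17 (F : CNFFam) (A : Finset ℕ) : Set VClause :=
  { C | ∃ u ∈ A, ∃ v ∈ A, ∃ i ∈ Finset.Icc 1 F.n, ∃ i' ∈ Finset.Icc 1 F.n, ∃ b : Bool,
      i' ≠ i ∧ C = {nLit (.L u v), nLit (.V u i), nLit (.D v i' b), pLit (.D u i' b)} }

/-- (A18) `¬R[u,v] ∨ ¬V[u,i] ∨ ¬D[v,i',b] ∨ D[u,i',b]`, `i' ≠ i`. -/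
def A18 (F : CNFFam) (A : Finset ℕ) : Set VClause :=
  { C | ∃ u ∈ A, ∃ v ∈ A, ∃ i ∈ Finset.Icc 1 F.n, ∃ i' ∈ Finset.Icc 1 F.n, ∃ b : Bool,
      i' ≠ i ∧ C = {nLit (.R u v), nLit (.V u i), nLit (.D v i' b), pLit (.D u i' b)} }

/-- (A19) `¬I[u,j] ∨ D[u,i,b]` for `X_i^{(b)} ∈ C_j`. -/
def A19 (F : CNFFam) (A : Finset ℕ) : Set VClause :=
  { C | ∃ u ∈ A, ∃ j ∈ Finset.Icc 1 F.m, ∃ i : ℕ, ∃ b : Bool,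
      (i, b) ∈ F.Cl j ∧ C = {nLit (.I u j), pLit (.D u i b)} }

/-- (A20) `¬D[u,i,0] ∨ ¬D[u,i,1]`. -/
def A20 (F : CNFFam) (A : Finset ℕ) : Set VClause :=
  { C | ∃ u ∈ A, ∃ i ∈ Finset.Icc 1 F.n, C = {nLit (.D u i false), nLit (.D u i true)} }

/-- (A21) `¬D[s,i,b]` (for the last index `t`). -/
def A21 (F : CNFFam) (t : ℕ) : Set VClause :=
  { C | ∃ i ∈ Finset.Icc 1 F.n, ∃ b : Bool, C = {nLit (.D t i b)} }

/-- (A22) `¬P[u] ∨ ¬L[u,v] ∨ P[v]`. -/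
def A22 (A : Finset ℕ) : Set VClause :=
  { C | ∃ u ∈ A, ∃ v ∈ A, C = {nLit (.P u), nLit (.L u v), pLit (.P v)} }

/-- (A23) `¬P[u] ∨ ¬R[u,v] ∨ P[v]`. -/
def A23 (A : Finset ℕ) : Set VClause :=
  { C | ∃ u ∈ A, ∃ v ∈ A, C = {nLit (.P u), nLit (.R u v), pLit (.P v)} }

/-- (A24) `P[s]` (for the last index `t`). -/
def A24 (t : ℕ) : Set VClause := { C | C = {pLit (.P t)} }

end Ref

/-- The formula `REF(F, A)` with index set `A` (in place of `[s]`) and last index `t`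
(in the role of `s`): the clauses (A1)–(A21). -/
def REFA (F : CNFFam) (A : Finset ℕ) (t : ℕ) : Set VClause :=
  Ref.A1 F A ∪ Ref.A2 F A ∪ Ref.A3 A ∪ Ref.A4 A ∪ Ref.A5 F A ∪ Ref.A6 F A ∪
    Ref.A7 A ∪ Ref.A8 A ∪ Ref.A9 A ∪ Ref.A10 A ∪ Ref.A11 A ∪ Ref.A12 A ∪ Ref.A13 A ∪
    Ref.A14 A ∪ Ref.A15 F A ∪ Ref.A16 F A ∪ Ref.A17 F A ∪ Ref.A18 F A ∪ Ref.A19 F A ∪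
    Ref.A20 F A ∪ Ref.A21 F t

/-- The formula `REF(F, s)`. -/
def REF (F : CNFFam) (s : ℕ) : Set VClause := REFA F (Finset.Icc 1 s) s

/-- Relativization of a clause: add the literal `¬P[u]` for every index `u` mentioned
by a variable occurring in the clause. -/
def relCl (C : VClause) : VClause :=
  C ∪ (C.image (fun l => RefVar.idx l.1)).image (fun u => nLit (.P u))

/-- The formula `RREF(F, s)`: the relativized clauses of `REF(F,s)` together with the
clauses (A22), (A23) and (A24). -/
def RREF (F : CNFFam) (s : ℕ) : Set VClause :=
  (relCl '' REF F s) ∪ Ref.A22 (Finset.Icc 1 s) ∪ Ref.A23 (Finset.Icc 1 s) ∪ Ref.A24 s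

/-- `REF(F,s)` with the clauses of types (A7) and (A8) deleted. -/
def REFnoLR (F : CNFFam) (s : ℕ) : Set VClause :=
  Ref.A1 F (Finset.Icc 1 s) ∪ Ref.A2 F (Finset.Icc 1 s) ∪ Ref.A3 (Finset.Icc 1 s) ∪
    Ref.A4 (Finset.Icc 1 s) ∪ Ref.A5 F (Finset.Icc 1 s) ∪ Ref.A6 F (Finset.Icc 1 s) ∪
    Ref.A9 (Finset.Icc 1 s) ∪ Ref.A10 (Finset.Icc 1 s) ∪ Ref.A11 (Finset.Icc 1 s) ∪
    Ref.A12 (Finset.Icc 1 s) ∪ Ref.A13 (Finset.Icc 1 s) ∪ Ref.A14 (Finset.Icc 1 s) ∪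
    Ref.A15 F (Finset.Icc 1 s) ∪ Ref.A16 F (Finset.Icc 1 s) ∪ Ref.A17 F (Finset.Icc 1 s) ∪
    Ref.A18 F (Finset.Icc 1 s) ∪ Ref.A19 F (Finset.Icc 1 s) ∪ Ref.A20 F (Finset.Icc 1 s) ∪
    Ref.A21 F s

/-- `RREF'(F,s)`: obtained from `RREF(F,s)` by deleting the (relativized) clauses of
types (A7) and (A8). -/
def RREF' (F : CNFFam) (s : ℕ) : Set VClause :=
  (relCl '' REFnoLR F s) ∪ Ref.A22 (Finset.Icc 1 s) ∪ Ref.A23 (Finset.Icc 1 s) ∪ Ref.A24 s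

/-! ## Refutations as structures -/

/-- A structure `(D, V, I, L, R)` of the type of a length-`s` refutation. -/
structure RefStruct where
  Dr : ℕ → ℕ → Bool → Bool
  Vf : ℕ → ℕ
  If' : ℕ → ℕ
  Lf : ℕ → ℕ
  Rf : ℕ → ℕ

namespace RefStruct

/-- The typing conditions: `D ⊆ [s]×[n]×B`, `V : [s] → [n]∪{0}`, `I : [s] → [m]∪{0}`,
`L, R : [s] → [s]∪{0}`. -/
def WFOn (M : RefStruct) (s n m : ℕ) : Prop :=
  (∀ u i b, M.Dr u i b = true → u ∈ Finset.Icc 1 s ∧ i ∈ Finset.Icc 1 n) ∧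
  (∀ u ∈ Finset.Icc 1 s, M.Vf u ≤ n) ∧
  (∀ u ∈ Finset.Icc 1 s, M.If' u ≤ m) ∧
  (∀ u ∈ Finset.Icc 1 s, M.Lf u ≤ s) ∧
  (∀ u ∈ Finset.Icc 1 s, M.Rf u ≤ s)

/-- (R1)–(R8): the structure is a refutation of `F` of length `s`. -/
def IsRefutationOf (M : RefStruct) (F : CNFFam) (s : ℕ) : Prop :=
  ∀ u ∈ Finset.Icc 1 s,
    ((M.Vf u = 0 ∨ M.If' u = 0) ∧ ¬(M.Vf u = 0 ∧ M.If' u = 0)) ∧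
    (M.If' u = 0 → M.Lf u ≠ 0 ∧ M.Rf u ≠ 0) ∧
    (M.Lf u < u ∧ M.Rf u < u) ∧
    (∀ i ∈ Finset.Icc 1 F.n, ∀ v ∈ Finset.Icc 1 s,
      (M.Vf u = i → M.Lf u = v → M.Dr v i false = true) ∧
      (M.Vf u = i → M.Rf u = v → M.Dr v i true = true) ∧
      (∀ i' ∈ Finset.Icc 1 F.n, ∀ b : Bool,
        M.Vf u = i → i ≠ i' → M.Lf u = v → M.Dr v i' b = true → M.Dr u i' b = true) ∧
      (∀ i' ∈ Finset.Icc 1 F.n, ∀ b : Bool,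
        M.Vf u = i → i ≠ i' → M.Rf u = v → M.Dr v i' b = true → M.Dr u i' b = true)) ∧
    (∀ j ∈ Finset.Icc 1 F.m, ∀ i : ℕ, ∀ b : Bool,
      M.If' u = j → (i, b) ∈ F.Cl j → M.Dr u i b = true) ∧
    (∀ i ∈ Finset.Icc 1 F.n, ¬(M.Dr u i false = true ∧ M.Dr u i true = true)) ∧
    (∀ i ∈ Finset.Icc 1 F.n, ∀ b : Bool, M.Dr s i b = false)

/-- The truth assignment associated to a structure. -/
def assign (M : RefStruct) : RefVar → Bool
  | .D u i b => M.Dr u i b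
  | .V u i => M.Vf u == i
  | .I u j => M.If' u == j
  | .L u v => M.Lf u == v
  | .R u v => M.Rf u == v
  | .P _ => true

end RefStruct

/-! ## The full-tree refutation -/

/-- The level `h` of the node numbered `u` in the full binary tree with `n+1` levels. -/
def levelOf (n u : ℕ) : ℕ := Nat.log 2 (2 ^ (n + 1) - u)

/-- The value (position within its level, `a₁` most significant) of the node numbered `u`. -/
def valOf (n u : ℕ) : ℕ := u - (2 ^ (n + 1) + 1 - 2 ^ (levelOf n u + 1))

/-- The `i`-th bit `a_i` of the binary string `a` labelling the node numbered `u`. -/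
def digitOf (n u i : ℕ) : Bool := (valOf n u).testBit (levelOf n u - i)

/-- The clause `C_a = X_1^{(a_1)} ∨ ⋯ ∨ X_n^{(a_n)}` labelling the leaf numbered `u`. -/
def leafClause (F : CNFFam) (u : ℕ) : Clause ℕ :=
  (Finset.Icc 1 F.n).image (fun i => (i, digitOf F.n u i))

/-- The full-tree Resolution refutation `(D*, V*, I*, L*, R*)` of `F`,
of length `s* = 2^{n+1} - 1`. -/
noncomputable def fullTree (F : CNFFam) : RefStruct where
  Dr := fun u i b =>
    decide (1 ≤ u ∧ u ≤ 2 ^ (F.n + 1) - 1 ∧ 1 ≤ i ∧ i ≤ levelOf F.n u) &&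
      (digitOf F.n u i == b)
  Vf := fun u =>
    if 1 ≤ u ∧ u ≤ 2 ^ (F.n + 1) - 1 ∧ levelOf F.n u < F.n then levelOf F.n u + 1 else 0
  If' := fun u =>
    if 1 ≤ u ∧ u ≤ 2 ^ (F.n + 1) - 1 ∧ levelOf F.n u = F.n then
      sInf { j : ℕ | j ∈ Finset.Icc 1 F.m ∧ F.Cl j ⊆ leafClause F u }
    else 0
  Lf := fun u =>
    if 1 ≤ u ∧ u ≤ 2 ^ (F.n + 1) - 1 ∧ levelOf F.n u < F.n then
      2 ^ (F.n + 1) + 1 + 2 * valOf F.n u - 2 ^ (levelOf F.n u + 2)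
    else 0
  Rf := fun u =>
    if 1 ≤ u ∧ u ≤ 2 ^ (F.n + 1) - 1 ∧ levelOf F.n u < F.n then
      2 ^ (F.n + 1) + 2 + 2 * valOf F.n u - 2 ^ (levelOf F.n u + 2)
    else 0

/-! ## Blocks, the family 𝓗, and conditions -/

/-- The integer `k` with `2^k < 3w ≤ 2^{k+1}`. -/
def kOf (w : ℕ) : ℕ := Nat.log 2 (3 * w - 1)

/-- The block `B*_i` of `[s*]`, `s* = 2^{n+1} - 1`. -/
def Bstar (n w i : ℕ) : Finset ℕ :=
  let s' := 2 ^ (n + 1) - 1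
  let k := kOf w
  if i = 0 then Finset.Icc (s' - 2 ^ (k + 1) + 2) s'
  else Finset.Icc (s' + 2 - 2 ^ (k + 1 + i)) (s' - 2 ^ (k + i) + 1)

/-- The block `B_i` of `[s]`. -/
def Bblk (n s w i : ℕ) : Finset ℕ :=
  let k := kOf w
  if i = 0 then Finset.Icc (s - 2 ^ (k + 1) + 2) s
  else if i = n - k then Finset.Icc 1 (s - 2 ^ (k + 1) * (n - k) + 1)
  else Finset.Icc (s - 2 ^ (k + 1) * (i + 1) + 2) (s - 2 ^ (k + 1) * i + 1)

/-- The bijection `t : B_0 → B*_0`, `t(u) = u - s + s*`. -/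
def tmap (n s u : ℕ) : ℕ := u + (2 ^ (n + 1) - 1 - s)

/-- `h` (a set of pairs) is a partial function. -/
def pfun (h : Finset (ℕ × ℕ)) : Prop :=
  ∀ p ∈ h, ∀ q ∈ h, p.1 = q.1 → p.2 = q.2

/-- The domain of a partial function given as a set of pairs. -/
def pdom (h : Finset (ℕ × ℕ)) : Finset ℕ := h.image Prod.fst

/-- The image of a partial function given as a set of pairs. -/
def pimg (h : Finset (ℕ × ℕ)) : Finset ℕ := h.image Prod.snd

/-- Membership in the family `𝓗`: injective partial functions
`h : [s]∪{0} → [s*]∪{0}` satisfying (H1)–(H4). -/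
def memH (n s w : ℕ) (h : Finset (ℕ × ℕ)) : Prop :=
  pfun h ∧
  (∀ p ∈ h, p.1 ∈ insert 0 (Finset.Icc 1 s) ∧
    p.2 ∈ insert 0 (Finset.Icc 1 (2 ^ (n + 1) - 1))) ∧
  (∀ p ∈ h, ∀ q ∈ h, p.2 = q.2 → p.1 = q.1) ∧
  ((0, 0) ∈ h) ∧
  (∀ p ∈ h, p.1 ∈ Bblk n s w 0 → p.2 = tmap n s p.1) ∧
  (∀ p ∈ h, ∀ i ∈ Finset.Icc 1 (n - kOf w), p.1 ∈ Bblk n s w i → p.2 ∈ Bstar n w i)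

/-- `∂I = {L*(u) | u ∈ I∖{0}} ∪ {R*(u) | u ∈ I∖{0}}`. -/
noncomputable def bnd (F : CNFFam) (I : Finset ℕ) : Finset ℕ :=
  (I.erase 0).image (fullTree F).Lf ∪ (I.erase 0).image (fullTree F).Rf

/-- A condition: a pair `p = (g, h)` of members of `𝓗` with (C1) `g ⊆ h` and
(C2) `Img(h) = Img(g) ∪ ∂Img(g)`. -/
def IsCond (F : CNFFam) (s w : ℕ) (g h : Finset (ℕ × ℕ)) : Prop :=
  memH F.n s w g ∧ memH F.n s w h ∧ g ⊆ h ∧ pimg h = pimg g ∪ bnd F (pimg g)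

/-- Application of a partial function given as a set of pairs. -/
noncomputable def papp (g : Finset (ℕ × ℕ)) (u : ℕ) : ℕ := sInf { v : ℕ | (u, v) ∈ g }

/-- Inverse application of an (injective) partial function given as a set of pairs. -/
noncomputable def pinv (h : Finset (ℕ × ℕ)) (y : ℕ) : ℕ := sInf { u : ℕ | (u, y) ∈ h }

/-- The partial assignment `α(p)` determined by a condition `p = (g, h)`: it is defined
precisely on the variables (of `REF(F,s)`) mentioning some `u ∈ Dom(g) ∖ {0}`, where it is
read off from the full-tree refutation through `g` (and `h` for the `L`- and `R`-variables). -/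
noncomputable def alphaP (F : CNFFam) (g h : Finset (ℕ × ℕ)) : RefVar → Option Bool :=
  fun x =>
    if RefVar.idx x ∈ (pdom g).erase 0 then
      match x with
      | RefVar.D u i b => some ((fullTree F).assign (RefVar.D (papp g u) i b))
      | RefVar.V u i => some ((fullTree F).assign (RefVar.V (papp g u) i))
      | RefVar.I u j => some ((fullTree F).assign (RefVar.I (papp g u) j))
      | RefVar.L u v => some (decide (v = pinv h ((fullTree F).Lf (papp g u))))
      | RefVar.R u v => some (decide (v = pinv h ((fullTree F).Rf (papp g u))))
      | RefVar.P _ => none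
    else none

open scoped Classical in
/-- The restriction `p↾I` of a condition `p = (g,h)`: `g'` is the restriction of `g` to
`I ∪ {0}` and `h'` is the restriction of `h` with image `Img(g') ∪ ∂Img(g')`. -/
noncomputable def condRestrict (F : CNFFam) (g h : Finset (ℕ × ℕ)) (I : Finset ℕ) :
    Finset (ℕ × ℕ) × Finset (ℕ × ℕ) :=
  let g' := g.filter (fun p => p.1 ∈ insert 0 I)
  let h' := h.filter (fun p => p.2 ∈ pimg g' ∪ bnd F (pimg g'))
  (g', h')


/-! ## Auxiliary lemmas -/

section CDFAux

lemma CDF_tree_struct (n u : ℕ) (h1 : 1 ≤ u) (h2 : u ≤ 2^(n+1) - 1) :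
    levelOf n u ≤ n ∧ valOf n u < 2 ^ (levelOf n u) ∧
    u = 2^(n+1) - 2^(levelOf n u + 1) + 1 + valOf n u := by
  have hn : (1:ℕ) ≤ 2^(n+1) := Nat.one_le_two_pow
  set d := 2^(n+1) - u with hd
  have hd1 : 1 ≤ d := by omega
  set l := levelOf n u with hl
  have hp1 : 2 ^ l ≤ d := Nat.pow_log_le_self 2 (by omega)
  have hp2 : d < 2 ^ (l+1) := Nat.lt_pow_succ_log_self (by norm_num) d
  have hln : l ≤ n := by
    by_contra hc
    have : 2^(n+1) ≤ 2^l := Nat.pow_le_pow_right (by norm_num) (by omega)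
    omega
  have hle : 2^(l+1) ≤ 2^(n+1) := Nat.pow_le_pow_right (by norm_num) (by omega)
  refine ⟨hln, ?_, ?_⟩ <;> simp only [valOf, ← hl, ← hd] <;> omega

lemma CDF_level_val_eq (n l v : ℕ) (hl : l ≤ n) (hv : v < 2^l) :
    levelOf n (2^(n+1) - 2^(l+1) + 1 + v) = l ∧ valOf n (2^(n+1) - 2^(l+1) + 1 + v) = v := by
  have hle : 2^(l+1) ≤ 2^(n+1) := Nat.pow_le_pow_right (by norm_num) (by omega)
  have hll : 2^l + 2^l = 2^(l+1) := by ring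
  set u := 2^(n+1) - 2^(l+1) + 1 + v with hu
  have hd : 2^(n+1) - u = 2^(l+1) - 1 - v := by omega
  have h1 : levelOf n u = l := by
    rw [levelOf, hd]; exact Nat.log_eq_of_pow_le_of_lt_pow (by omega) (by omega)
  refine ⟨h1, ?_⟩
  rw [valOf, h1]; omega

lemma CDF_testBit_two_mul_add (v c j : ℕ) (hc : c ≤ 1) :
    (2*v + c).testBit (j+1) = v.testBit j := by
  rw [Nat.testBit_succ]
  congr 1
  omega

lemma CDF_testBit_two_mul_add_zero (v c : ℕ) (hc : c ≤ 1) :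
    (2*v + c).testBit 0 = decide (c = 1) := by
  rw [Nat.testBit_zero]
  rcases Nat.le_one_iff_eq_zero_or_eq_one.mp hc with h | h <;> subst h <;>
    simp [Nat.add_mul_mod_self_left] <;> omega

/-- Structure of a child node `y = 2^(n+1) - 2^(l+2) + 1 + (2*v+c)`. -/
lemma CDF_child_struct (n l v c : ℕ) (hl : l < n) (hv : v < 2^l) (hc : c ≤ 1) :
    1 ≤ 2^(n+1) - 2^(l+2) + 1 + (2*v+c) ∧
    2^(n+1) - 2^(l+2) + 1 + (2*v+c) ≤ 2^(n+1) - 1 ∧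
    levelOf n (2^(n+1) - 2^(l+2) + 1 + (2*v+c)) = l + 1 ∧
    valOf n (2^(n+1) - 2^(l+2) + 1 + (2*v+c)) = 2*v + c := by
  have h1 : 2^(l+2) ≤ 2^(n+1) := Nat.pow_le_pow_right (by norm_num) (by omega)
  have h2 : 2^l + 2^l = 2^(l+1) := by ring
  have h3 : 2^(l+1) + 2^(l+1) = 2^(l+2) := by ring
  have hv' : 2*v + c < 2^(l+1) := by omega
  obtain ⟨ha, hb⟩ := CDF_level_val_eq n (l+1) (2*v+c) (by omega) hv'
  refine ⟨by omega, by omega, ha, hb⟩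


lemma CDF_Vf (F : CNFFam) (x : ℕ) (h1 : 1 ≤ x) (h2 : x ≤ 2^(F.n+1)-1) :
    (fullTree F).Vf x = if levelOf F.n x < F.n then levelOf F.n x + 1 else 0 := by
  simp [fullTree, h1, h2]

lemma CDF_If (F : CNFFam) (x : ℕ) (h1 : 1 ≤ x) (h2 : x ≤ 2^(F.n+1)-1) :
    (fullTree F).If' x = if levelOf F.n x = F.n then
      sInf { j : ℕ | j ∈ Finset.Icc 1 F.m ∧ F.Cl j ⊆ leafClause F x } else 0 := by
  simp [fullTree, h1, h2]

lemma CDF_Lf (F : CNFFam) (x : ℕ) (h1 : 1 ≤ x) (h2 : x ≤ 2^(F.n+1)-1) :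
    (fullTree F).Lf x = if levelOf F.n x < F.n then
      2 ^ (F.n + 1) + 1 + 2 * valOf F.n x - 2 ^ (levelOf F.n x + 2) else 0 := by
  simp [fullTree, h1, h2]

lemma CDF_Rf (F : CNFFam) (x : ℕ) (h1 : 1 ≤ x) (h2 : x ≤ 2^(F.n+1)-1) :
    (fullTree F).Rf x = if levelOf F.n x < F.n then
      2 ^ (F.n + 1) + 2 + 2 * valOf F.n x - 2 ^ (levelOf F.n x + 2) else 0 := by
  simp [fullTree, h1, h2]

lemma CDF_Dr (F : CNFFam) (x i : ℕ) (b : Bool) (h1 : 1 ≤ x) (h2 : x ≤ 2^(F.n+1)-1) :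
    (fullTree F).Dr x i b = true ↔ (1 ≤ i ∧ i ≤ levelOf F.n x ∧ digitOf F.n x i = b) := by
  simp only [fullTree, Bool.and_eq_true, decide_eq_true_eq, beq_iff_eq]
  constructor
  · rintro ⟨⟨_, _, hi1, hi2⟩, hd⟩; exact ⟨hi1, hi2, hd⟩
  · rintro ⟨hi1, hi2, hd⟩; exact ⟨⟨h1, h2, hi1, hi2⟩, hd⟩

/-- Rewriting the left/right-child value. -/
lemma CDF_Lf_eq (F : CNFFam) (x : ℕ) (h1 : 1 ≤ x) (h2 : x ≤ 2^(F.n+1)-1)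
    (hl : levelOf F.n x < F.n) :
    (fullTree F).Lf x = 2^(F.n+1) - 2^(levelOf F.n x + 2) + 1 + (2 * valOf F.n x + 0) := by
  have hp : 2^(levelOf F.n x + 2) ≤ 2^(F.n+1) := Nat.pow_le_pow_right (by norm_num) (by omega)
  rw [CDF_Lf F x h1 h2, if_pos hl]; omega

lemma CDF_Rf_eq (F : CNFFam) (x : ℕ) (h1 : 1 ≤ x) (h2 : x ≤ 2^(F.n+1)-1)
    (hl : levelOf F.n x < F.n) :
    (fullTree F).Rf x = 2^(F.n+1) - 2^(levelOf F.n x + 2) + 1 + (2 * valOf F.n x + 1) := by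
  have hp : 2^(levelOf F.n x + 2) ≤ 2^(F.n+1) := Nat.pow_le_pow_right (by norm_num) (by omega)
  rw [CDF_Rf F x h1 h2, if_pos hl]; omega

/-- For an unsatisfiable well-formed `F`, every leaf clause is a weakening
of some clause of `F`. -/
lemma CDF_exists_axiom (F : CNFFam) (hWF : F.WF) (hunsat : ¬F.Sat) (u : ℕ) :
    ∃ j ∈ Finset.Icc 1 F.m, F.Cl j ⊆ leafClause F u := by
  by_contra hno
  push_neg at hno
  apply hunsat
  refine ⟨fun i => !(digitOf F.n u i), ?_⟩
  rintro C ⟨j, hj, rfl⟩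
  by_contra hnone
  push_neg at hnone
  obtain ⟨l, hl, hl2⟩ := Finset.not_subset.mp (hno j hj)
  apply hl2
  have hvar := (hWF.1 j hj).2 l hl
  have : l.2 = digitOf F.n u l.1 := by
    have := hnone l hl
    cases hb : l.2 <;> cases hd : digitOf F.n u l.1 <;> simp_all
  rw [leafClause, Finset.mem_image]
  exact ⟨l.1, hvar, by rw [← this]⟩

/-- The value of `If'` at a leaf. -/
lemma CDF_If_leaf (F : CNFFam) (hWF : F.WF) (hunsat : ¬F.Sat) (x : ℕ)
    (h1 : 1 ≤ x) (h2 : x ≤ 2^(F.n+1)-1) (hl : levelOf F.n x = F.n) :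
    (fullTree F).If' x ∈ Finset.Icc 1 F.m ∧ F.Cl ((fullTree F).If' x) ⊆ leafClause F x := by
  rw [CDF_If F x h1 h2, if_pos hl]
  obtain ⟨j, hj, hjs⟩ := CDF_exists_axiom F hWF hunsat x
  have hne : { j : ℕ | j ∈ Finset.Icc 1 F.m ∧ F.Cl j ⊆ leafClause F x }.Nonempty := ⟨j, hj, hjs⟩
  exact Nat.sInf_mem hne

/-- `2^k < 3w ≤ 2^(k+1)` for `k = kOf w`. -/
lemma CDF_kOf (w : ℕ) (hw : 1 ≤ w) : 2^(kOf w) < 3*w ∧ 3*w ≤ 2^(kOf w + 1) := by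
  have h1 : 2^(kOf w) ≤ 3*w - 1 := Nat.pow_log_le_self 2 (by omega)
  have h2 : 3*w - 1 < 2^(kOf w + 1) := Nat.lt_pow_succ_log_self (by norm_num) _
  omega

lemma CDF_pfun_app (g : Finset (ℕ × ℕ)) (u : ℕ) (hu : u ∈ pdom g) : (u, papp g u) ∈ g := by
  rw [pdom, Finset.mem_image] at hu
  obtain ⟨p, hp, hp1⟩ := hu
  have hne : { v : ℕ | (u, v) ∈ g }.Nonempty := ⟨p.2, by rw [← hp1]; exact hp⟩
  exact Nat.sInf_mem hne

lemma CDF_pinv_app (h : Finset (ℕ × ℕ)) (y : ℕ) (hy : y ∈ pimg h) : (pinv h y, y) ∈ h := by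
  rw [pimg, Finset.mem_image] at hy
  obtain ⟨p, hp, hp2⟩ := hy
  have hne : { u : ℕ | (u, y) ∈ h }.Nonempty := ⟨p.1, by rw [← hp2]; exact hp⟩
  exact Nat.sInf_mem hne

lemma CDF_alpha_none (F : CNFFam) (g h : Finset (ℕ × ℕ)) (x : RefVar)
    (hx : RefVar.idx x ∉ (pdom g).erase 0) : alphaP F g h x = none := by
  rw [alphaP.eq_def]; simp [hx]

lemma CDF_alpha_D (F : CNFFam) (g h : Finset (ℕ × ℕ)) (u i : ℕ) (b : Bool)
    (hx : u ∈ (pdom g).erase 0) :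
    alphaP F g h (RefVar.D u i b) = some ((fullTree F).Dr (papp g u) i b) := by
  rw [alphaP.eq_def]; simp [RefVar.idx, hx, RefStruct.assign]

lemma CDF_alpha_V (F : CNFFam) (g h : Finset (ℕ × ℕ)) (u i : ℕ)
    (hx : u ∈ (pdom g).erase 0) :
    alphaP F g h (RefVar.V u i) = some ((fullTree F).Vf (papp g u) == i) := by
  rw [alphaP.eq_def]; simp [RefVar.idx, hx, RefStruct.assign]

lemma CDF_alpha_I (F : CNFFam) (g h : Finset (ℕ × ℕ)) (u j : ℕ)
    (hx : u ∈ (pdom g).erase 0) :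
    alphaP F g h (RefVar.I u j) = some ((fullTree F).If' (papp g u) == j) := by
  rw [alphaP.eq_def]; simp [RefVar.idx, hx, RefStruct.assign]

lemma CDF_alpha_L (F : CNFFam) (g h : Finset (ℕ × ℕ)) (u v : ℕ)
    (hx : u ∈ (pdom g).erase 0) :
    alphaP F g h (RefVar.L u v) = some (decide (v = pinv h ((fullTree F).Lf (papp g u)))) := by
  rw [alphaP.eq_def]; simp [RefVar.idx, hx]

lemma CDF_alpha_R (F : CNFFam) (g h : Finset (ℕ × ℕ)) (u v : ℕ)
    (hx : u ∈ (pdom g).erase 0) :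
    alphaP F g h (RefVar.R u v) = some (decide (v = pinv h ((fullTree F).Rf (papp g u)))) := by
  rw [alphaP.eq_def]; simp [RefVar.idx, hx]


lemma CDF_Bstar0_iff (n w x : ℕ) :
    x ∈ Bstar n w 0 ↔ 2^(n+1)-1 - 2^(kOf w+1)+2 ≤ x ∧ x ≤ 2^(n+1)-1 := by
  simp only [Bstar, if_true, eq_self_iff_true, Finset.mem_Icc]

lemma CDF_Bstari_iff (n w x i : ℕ) (h : i ≠ 0) :
    x ∈ Bstar n w i ↔ 2^(n+1)-1+2 - 2^(kOf w+1+i) ≤ x ∧ x ≤ 2^(n+1)-1-2^(kOf w+i)+1 := by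
  simp only [Bstar]
  rw [if_neg h, Finset.mem_Icc]

lemma CDF_Bblk0_iff (n s w u : ℕ) :
    u ∈ Bblk n s w 0 ↔ s - 2^(kOf w+1)+2 ≤ u ∧ u ≤ s := by
  simp only [Bblk, if_true, eq_self_iff_true, Finset.mem_Icc]

lemma CDF_Bblk_last_iff (n s w u : ℕ) (h : n - kOf w ≠ 0) :
    u ∈ Bblk n s w (n - kOf w) ↔ 1 ≤ u ∧ u ≤ s - 2^(kOf w+1)*(n-kOf w)+1 := by
  simp only [Bblk, eq_self_iff_true, if_true]
  rw [if_neg h, Finset.mem_Icc]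

lemma CDF_Bblk_mid_iff (n s w u i : ℕ) (h1 : i ≠ 0) (h2 : i ≠ n - kOf w) :
    u ∈ Bblk n s w i ↔ s - 2^(kOf w+1)*(i+1)+2 ≤ u ∧ u ≤ s - 2^(kOf w+1)*i+1 := by
  simp only [Bblk]
  rw [if_neg h1, if_neg h2, Finset.mem_Icc]

lemma CDF_Bstar_level0 (n w x : ℕ) (h2 : x ≤ 2^(n+1)-1)
    (hmem : x ∈ Bstar n w 0) : levelOf n x ≤ kOf w := by
  rw [CDF_Bstar0_iff] at hmem
  by_contra hc
  have hd1 : 1 ≤ 2^(n+1) - x := by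
    have : (1:ℕ) ≤ 2^(n+1) := Nat.one_le_two_pow
    omega
  have h1 : 2^(kOf w + 1) ≤ 2^(levelOf n x) :=
    Nat.pow_le_pow_right (by norm_num) (by omega)
  have h2' : 2^(levelOf n x) ≤ 2^(n+1) - x := Nat.pow_log_le_self 2 (by omega)
  omega

lemma CDF_Bstar_leveli (n w x i : ℕ) (hi : 1 ≤ i) (hin : i ≤ n - kOf w) (hkn : kOf w ≤ n)
    (hmem : x ∈ Bstar n w i) : levelOf n x = kOf w + i := by
  rw [CDF_Bstari_iff n w x i (by omega)] at hmem
  have he : kOf w + 1 + i = (kOf w + i) + 1 := by omega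
  have hp1 : 2^(kOf w + i) + 2^(kOf w + i) = 2^(kOf w + i + 1) := by ring
  have hp2 : 2^(kOf w + 1 + i) = 2^(kOf w + i + 1) := by rw [he]
  have hp3 : 2^(kOf w + i + 1) ≤ 2^(n+1) := Nat.pow_le_pow_right (by norm_num) (by omega)
  have hx1 : (1:ℕ) ≤ 2^(kOf w + i) := Nat.one_le_two_pow
  rw [levelOf]
  refine Nat.log_eq_of_pow_le_of_lt_pow (by omega) ?_
  rw [← he, hp2]
  omega

lemma CDF_tmap_mem (n s w u : ℕ) (hs2 : s ≤ 2^n) (hE : 2^(kOf w + 1) ≤ s)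
    (hu : u ∈ Bblk n s w 0) : tmap n s u ∈ Bstar n w 0 := by
  rw [CDF_Bblk0_iff] at hu
  rw [CDF_Bstar0_iff, tmap]
  have h1 : 2^n + 2^n = 2^(n+1) := by ring
  omega

lemma CDF_Bblk_cover (n s w u : ℕ) (hE : 2^(kOf w + 1) ≤ s)
    (hEnk : 2^(kOf w+1) * (n - kOf w) ≤ s) (hu1 : 1 ≤ u) (hu2 : u ≤ s)
    (hnk : 1 ≤ n - kOf w) : ∃ i, i ≤ n - kOf w ∧ u ∈ Bblk n s w i := by
  obtain ⟨E, hEdef⟩ : ∃ E, E = 2^(kOf w+1) := ⟨_, rfl⟩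
  have hE1 : 1 ≤ E := hEdef ▸ Nat.one_le_two_pow
  obtain ⟨q, r, hqr, hr⟩ : ∃ q r, E * q + r = s - u + 1 ∧ r < E :=
    ⟨(s-u+1)/E, (s-u+1)%E, Nat.div_add_mod _ _, Nat.mod_lt _ (by omega)⟩
  rcases le_or_gt (n - kOf w) q with hcase | hcase
  · refine ⟨n - kOf w, le_refl _, ?_⟩
    rw [CDF_Bblk_last_iff n s w u (by omega), ← hEdef]
    obtain ⟨A, hA⟩ : ∃ A, A = E * q := ⟨_, rfl⟩
    obtain ⟨B, hB⟩ : ∃ B, B = E * (n - kOf w) := ⟨_, rfl⟩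
    have h1 : B ≤ A := by rw [hA, hB]; exact Nat.mul_le_mul_left E hcase
    rw [← hB]
    rw [← hA] at hqr
    omega
  · rcases Nat.eq_zero_or_pos q with hq0 | hq1
    · refine ⟨0, by omega, ?_⟩
      rw [CDF_Bblk0_iff, ← hEdef]
      subst hq0
      omega
    · refine ⟨q, by omega, ?_⟩
      rw [CDF_Bblk_mid_iff n s w u q (by omega) (by omega), ← hEdef]
      obtain ⟨A, hA⟩ : ∃ A, A = E * q := ⟨_, rfl⟩
      have h2 : E * (q + 1) = A + E := by rw [hA]; ring
      have h3 : E * (q + 1) ≤ E * (n - kOf w) := Nat.mul_le_mul_left E (by omega)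
      have h4 : E * (n - kOf w) ≤ s := by rw [hEdef]; exact hEnk
      rw [h2] at h3
      rw [h2, ← hA]
      rw [← hA] at hqr
      omega

/-- The key ordering lemma: if `(u,x), (v,y) ∈ h` with `y` one level below `x`,
then `v < u`. -/
lemma CDF_block_lt (F : CNFFam) (s w : ℕ) (hn : 1 ≤ F.n) (hw : 1 ≤ w)
    (hs6 : 6 * F.n * w ≤ s) (hs2 : s ≤ 2 ^ F.n)
    (h : Finset (ℕ × ℕ)) (hhH : memH F.n s w h)
    (u v x y : ℕ) (hu1 : 1 ≤ u) (hu2 : u ≤ s) (hv1 : 1 ≤ v) (hv2 : v ≤ s)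
    (hxh : (u, x) ∈ h) (hyh : (v, y) ∈ h)
    (h1x : 1 ≤ x) (h2x : x ≤ 2^(F.n+1)-1) (hlx : levelOf F.n x < F.n)
    (h1y : 1 ≤ y) (h2y : y ≤ 2^(F.n+1)-1) (hylev : levelOf F.n y = levelOf F.n x + 1) :
    v < u := by
  obtain ⟨hhf, hhran, hhinj, hh0, hh3, hh4⟩ := hhH
  obtain ⟨hk1, hk2⟩ := CDF_kOf w hw
  have hpow : 2^(kOf w+1) = 2 * 2^(kOf w) := by ring
  have h6 : 6 * w ≤ 2 ^ F.n := le_trans (by nlinarith) (le_trans hs6 hs2)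
  have h6w : 6 * w ≤ s := le_trans (by nlinarith) hs6
  have hkn : kOf w + 2 ≤ F.n := by
    by_contra hc
    have : 2^F.n ≤ 2^(kOf w+1) := Nat.pow_le_pow_right (by norm_num) (by omega)
    omega
  have hE : 2^(kOf w+1) ≤ s := by omega
  have hnk1 : 1 ≤ F.n - kOf w := by omega
  have hEnk : 2^(kOf w+1) * (F.n - kOf w) ≤ s := by
    calc 2^(kOf w+1) * (F.n - kOf w) ≤ (6*w) * F.n :=
          Nat.mul_le_mul (by omega) (by omega)
      _ = 6 * F.n * w := by ring
      _ ≤ s := hs6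
  have hsx := CDF_tree_struct F.n x h1x h2x
  have hsy := CDF_tree_struct F.n y h1y h2y
  have hyx : y < x := by
    set l := levelOf F.n x with hldef
    have hp2 : 2^(l+1) ≤ 2^(F.n+1) := Nat.pow_le_pow_right (by norm_num) (by omega)
    have hp3 : (1:ℕ) ≤ 2^l := Nat.one_le_two_pow
    have hp4 : 2^l + 2^l = 2^(l+1) := by ring
    have hp5 : 2^(l+1) + 2^(l+1) = 2^(l+1+1) := by ring
    have hp6 : 2^(l+1+1) ≤ 2^(F.n+1) := Nat.pow_le_pow_right (by norm_num) (by omega)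
    rw [hylev] at hsy
    omega
  obtain ⟨i, hile, hui⟩ := CDF_Bblk_cover F.n s w u hE hEnk hu1 hu2 hnk1
  obtain ⟨j, hjle, hvj⟩ := CDF_Bblk_cover F.n s w v hE hEnk hv1 hv2 hnk1
  rcases Nat.eq_zero_or_pos i with hi0 | hi1
  · subst hi0
    have hx_eq : x = tmap F.n s u := hh3 (u, x) hxh hui
    have hxB : x ∈ Bstar F.n w 0 := hx_eq ▸ CDF_tmap_mem F.n s w u hs2 hE hui
    have hxlev : levelOf F.n x ≤ kOf w := CDF_Bstar_level0 F.n w x h2x hxB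
    rcases Nat.eq_zero_or_pos j with hj0 | hj1
    · subst hj0
      have hy_eq : y = tmap F.n s v := hh3 (v, y) hyh hvj
      rw [hx_eq, hy_eq, tmap, tmap] at hyx
      omega
    · have hyB : y ∈ Bstar F.n w j := hh4 (v, y) hyh j (Finset.mem_Icc.mpr ⟨hj1, hjle⟩) hvj
      have hylev' : levelOf F.n y = kOf w + j :=
        CDF_Bstar_leveli F.n w y j hj1 hjle (by omega) hyB
      have hj1' : j = 1 := by omega
      subst hj1'
      rw [CDF_Bblk0_iff] at hui
      rw [CDF_Bblk_mid_iff F.n s w v 1 (by omega) (by omega)] at hvj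
      have hv2' : v ≤ s - 2^(kOf w+1) * 1 + 1 := hvj.2
      rw [mul_one] at hv2'
      have hu1' := hui.1
      clear hvj hui
      omega
  · have hxB : x ∈ Bstar F.n w i := hh4 (u, x) hxh i (Finset.mem_Icc.mpr ⟨hi1, hile⟩) hui
    have hxlev : levelOf F.n x = kOf w + i :=
      CDF_Bstar_leveli F.n w x i hi1 hile (by omega) hxB
    rcases Nat.eq_zero_or_pos j with hj0 | hj1
    · subst hj0
      have hy_eq : y = tmap F.n s v := hh3 (v, y) hyh hvj
      have hyB : y ∈ Bstar F.n w 0 := hy_eq ▸ CDF_tmap_mem F.n s w v hs2 hE hvj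
      have : levelOf F.n y ≤ kOf w := CDF_Bstar_level0 F.n w y h2y hyB
      omega
    · have hyB : y ∈ Bstar F.n w j := hh4 (v, y) hyh j (Finset.mem_Icc.mpr ⟨hj1, hjle⟩) hvj
      have hylev' : levelOf F.n y = kOf w + j :=
        CDF_Bstar_leveli F.n w y j hj1 hjle (by omega) hyB
      have hji : j = i + 1 := by omega
      subst hji
      have hiub : i + 1 ≤ F.n - kOf w := hjle
      rw [CDF_Bblk_mid_iff F.n s w u i (by omega) (by omega)] at hui
      have huL : s - 2^(kOf w+1) * (i+1) + 2 ≤ u := hui.1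
      obtain ⟨P, hP⟩ : ∃ P, P = 2^(kOf w+1)*(i+1) := ⟨_, rfl⟩
      rw [← hP] at huL
      by_cases hlast : i + 1 = F.n - kOf w
      · rw [hlast, CDF_Bblk_last_iff F.n s w v (by omega)] at hvj
        have hvU : v ≤ s - 2^(kOf w+1) * (F.n - kOf w) + 1 := hvj.2
        rw [← hlast, ← hP] at hvU
        clear hui hvj
        omega
      · rw [CDF_Bblk_mid_iff F.n s w v (i+1) (by omega) hlast] at hvj
        have hvU : v ≤ s - 2^(kOf w+1) * (i+1) + 1 := hvj.2
        rw [← hP] at hvU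
        clear hui hvj
        omega

end CDFAux



/-! ## Statement 12 -/

/-- Claim 4: for an unsatisfiable CNF `F` with `n` variables and integers `w, s ≥ 1` with
`2^n ≥ s ≥ 6nw`: if `p` is a condition and `C` is a clause of `REF(F,s)`, then
`C↾α(p) ≠ 0`, i.e. `α(p)` does not falsify `C`. -/
theorem conditions_do_not_falsify_axioms (F : CNFFam) (hWF : F.WF) (hunsat : ¬F.Sat)
    (w s : ℕ) (hn : 1 ≤ F.n) (hw : 1 ≤ w) (hs : 1 ≤ s)
    (hlow : 6 * F.n * w ≤ s) (hhigh : s ≤ 2 ^ F.n)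
    (g h : Finset (ℕ × ℕ)) (hcond : IsCond F s w g h)
    (C : VClause) (hC : C ∈ REF F s) :
    ¬Clause.FalsByR (alphaP F g h) C := by
  intro hF
  obtain ⟨hgH, hhH, hgh, himg⟩ := hcond
  obtain ⟨hgf, hgran, hginj, hg0, hg3, hg4⟩ := hgH
  have hhH' := hhH
  obtain ⟨hhf, hhran, hhinj, hh0, hh3, hh4⟩ := hhH'
  have hp2n : 2^F.n + 2^F.n = 2^(F.n+1) := by ring
  have hsstar : s ≤ 2^(F.n+1) - 1 := by omega
  -- basic facts about elements of the domain of g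
  have hdomg : ∀ u : ℕ, u ∈ (pdom g).erase 0 →
      (u, papp g u) ∈ g ∧ (1 ≤ u ∧ u ≤ s) ∧ 1 ≤ papp g u ∧ papp g u ≤ 2^(F.n+1)-1 := by
    intro u hu
    have hu0 : u ≠ 0 := (Finset.mem_erase.mp hu).1
    have hud : u ∈ pdom g := (Finset.mem_erase.mp hu).2
    have hpair := CDF_pfun_app g u hud
    have hran := hgran (u, papp g u) hpair
    have hu1 : 1 ≤ u ∧ u ≤ s := by
      rcases Finset.mem_insert.mp hran.1 with h' | h'
      · exact absurd h' hu0
      · exact Finset.mem_Icc.mp h'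
    have hgu0 : papp g u ≠ 0 := by
      intro h0
      exact hu0 (hginj (u, papp g u) hpair (0, 0) hg0 (by simpa using h0))
    have hgu : 1 ≤ papp g u ∧ papp g u ≤ 2^(F.n+1)-1 := by
      rcases Finset.mem_insert.mp hran.2 with h' | h'
      · exact absurd h' hgu0
      · exact Finset.mem_Icc.mp h'
    exact ⟨hpair, hu1, hgu.1, hgu.2⟩
  have hGH : ∀ u : ℕ, u ∈ (pdom g).erase 0 → (u, papp g u) ∈ h :=
    fun u hu => hgh (hdomg u hu).1
  -- the left/right child of the image of a domain element is in the image of h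
  have hximg : ∀ u : ℕ, u ∈ (pdom g).erase 0 → papp g u ∈ (pimg g).erase 0 := by
    intro u hu
    obtain ⟨hpair, _, hx1, _⟩ := hdomg u hu
    exact Finset.mem_erase.mpr ⟨by omega, Finset.mem_image.mpr ⟨(u, papp g u), hpair, rfl⟩⟩
  have hLmem : ∀ u : ℕ, u ∈ (pdom g).erase 0 → (fullTree F).Lf (papp g u) ∈ pimg h := by
    intro u hu
    rw [himg]
    exact Finset.mem_union_right _ (Finset.mem_union_left _
      (Finset.mem_image.mpr ⟨papp g u, hximg u hu, rfl⟩))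
  have hRmem : ∀ u : ℕ, u ∈ (pdom g).erase 0 → (fullTree F).Rf (papp g u) ∈ pimg h := by
    intro u hu
    rw [himg]
    exact Finset.mem_union_right _ (Finset.mem_union_right _
      (Finset.mem_image.mpr ⟨papp g u, hximg u hu, rfl⟩))
  simp only [REF, REFA, Set.mem_union] at hC
  rcases hC with ((((((((((((((((((((hC|hC)|hC)|hC)|hC)|hC)|hC)|hC)|hC)|hC)|hC)|hC)|hC)|hC)|hC)|hC)|hC)|hC)|hC)|hC)|hC)
  -- (A1)
  · obtain ⟨u, huA, rfl⟩ := hC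
    have hmemu : u ∈ (pdom g).erase 0 := by
      by_contra hnd
      have h1 := hF _ (Finset.mem_image.mpr ⟨0, Finset.mem_range.mpr (by omega), rfl⟩)
      simp only [pLit] at h1
      rw [CDF_alpha_none F g h _ (by exact hnd)] at h1
      cases h1
    obtain ⟨hpair, ⟨hu1, hu2⟩, hx1, hx2⟩ := hdomg u hmemu
    have hVle : (fullTree F).Vf (papp g u) ≤ F.n := by
      have hts := CDF_tree_struct F.n (papp g u) hx1 hx2
      rw [CDF_Vf F _ hx1 hx2]
      split_ifs with hc <;> omega
    have h1 := hF _ (Finset.mem_image.mpr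
      ⟨(fullTree F).Vf (papp g u), Finset.mem_range.mpr (by omega), rfl⟩)
    simp only [pLit] at h1
    rw [CDF_alpha_V F g h u _ hmemu] at h1
    simp at h1
  -- (A2)
  · obtain ⟨u, huA, rfl⟩ := hC
    have hmemu : u ∈ (pdom g).erase 0 := by
      by_contra hnd
      have h1 := hF _ (Finset.mem_image.mpr ⟨0, Finset.mem_range.mpr (by omega), rfl⟩)
      simp only [pLit] at h1
      rw [CDF_alpha_none F g h _ (by exact hnd)] at h1
      cases h1
    obtain ⟨hpair, ⟨hu1, hu2⟩, hx1, hx2⟩ := hdomg u hmemu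
    have hIle : (fullTree F).If' (papp g u) ≤ F.m := by
      by_cases hc : levelOf F.n (papp g u) = F.n
      · exact (Finset.mem_Icc.mp (CDF_If_leaf F hWF hunsat _ hx1 hx2 hc).1).2
      · rw [CDF_If F _ hx1 hx2, if_neg hc]; omega
    have h1 := hF _ (Finset.mem_image.mpr
      ⟨(fullTree F).If' (papp g u), Finset.mem_range.mpr (by omega), rfl⟩)
    simp only [pLit] at h1
    rw [CDF_alpha_I F g h u _ hmemu] at h1
    simp at h1
  -- (A3)
  · obtain ⟨u, huA, rfl⟩ := hC
    have hmemu : u ∈ (pdom g).erase 0 := by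
      by_contra hnd
      have h1 := hF _ (Finset.mem_image.mpr ⟨0, Finset.mem_insert_self _ _, rfl⟩)
      simp only [pLit] at h1
      rw [CDF_alpha_none F g h _ (by exact hnd)] at h1
      cases h1
    have hy := hLmem u hmemu
    have hpv := CDF_pinv_app h _ hy
    have hpvran := (hhran _ hpv).1
    have h1 := hF _ (Finset.mem_image.mpr ⟨pinv h ((fullTree F).Lf (papp g u)), hpvran, rfl⟩)
    simp only [pLit] at h1
    rw [CDF_alpha_L F g h u _ hmemu] at h1
    simp at h1
  -- (A4)
  · obtain ⟨u, huA, rfl⟩ := hC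
    have hmemu : u ∈ (pdom g).erase 0 := by
      by_contra hnd
      have h1 := hF _ (Finset.mem_image.mpr ⟨0, Finset.mem_insert_self _ _, rfl⟩)
      simp only [pLit] at h1
      rw [CDF_alpha_none F g h _ (by exact hnd)] at h1
      cases h1
    have hy := hRmem u hmemu
    have hpv := CDF_pinv_app h _ hy
    have hpvran := (hhran _ hpv).1
    have h1 := hF _ (Finset.mem_image.mpr ⟨pinv h ((fullTree F).Rf (papp g u)), hpvran, rfl⟩)
    simp only [pLit] at h1
    rw [CDF_alpha_R F g h u _ hmemu] at h1
    simp at h1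
  -- (A5)
  · obtain ⟨u, huA, i, hi, i', hi', hne, rfl⟩ := hC
    have hmemu : u ∈ (pdom g).erase 0 := by
      by_contra hnd
      have h1 := hF _ (Finset.mem_insert_self _ _)
      simp only [nLit] at h1
      rw [CDF_alpha_none F g h _ (by exact hnd)] at h1
      cases h1
    have h1 := hF _ (Finset.mem_insert_self _ _)
    have h2 := hF _ (Finset.mem_insert.mpr (Or.inr (Finset.mem_singleton_self _)))
    simp only [nLit] at h1 h2
    rw [CDF_alpha_V F g h u i hmemu] at h1
    rw [CDF_alpha_V F g h u i' hmemu] at h2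
    simp at h1 h2
    omega
  -- (A6)
  · obtain ⟨u, huA, j, hj, j', hj', hne, rfl⟩ := hC
    have hmemu : u ∈ (pdom g).erase 0 := by
      by_contra hnd
      have h1 := hF _ (Finset.mem_insert_self _ _)
      simp only [nLit] at h1
      rw [CDF_alpha_none F g h _ (by exact hnd)] at h1
      cases h1
    have h1 := hF _ (Finset.mem_insert_self _ _)
    have h2 := hF _ (Finset.mem_insert.mpr (Or.inr (Finset.mem_singleton_self _)))
    simp only [nLit] at h1 h2
    rw [CDF_alpha_I F g h u j hmemu] at h1
    rw [CDF_alpha_I F g h u j' hmemu] at h2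
    simp at h1 h2
    omega
  -- (A7)
  · obtain ⟨u, huA, v, hv, v', hv', hne, rfl⟩ := hC
    have hmemu : u ∈ (pdom g).erase 0 := by
      by_contra hnd
      have h1 := hF _ (Finset.mem_insert_self _ _)
      simp only [nLit] at h1
      rw [CDF_alpha_none F g h _ (by exact hnd)] at h1
      cases h1
    have h1 := hF _ (Finset.mem_insert_self _ _)
    have h2 := hF _ (Finset.mem_insert.mpr (Or.inr (Finset.mem_singleton_self _)))
    simp only [nLit] at h1 h2
    rw [CDF_alpha_L F g h u v hmemu] at h1
    rw [CDF_alpha_L F g h u v' hmemu] at h2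
    simp at h1 h2
    exact hne (h1.trans h2.symm)
  -- (A8)
  · obtain ⟨u, huA, v, hv, v', hv', hne, rfl⟩ := hC
    have hmemu : u ∈ (pdom g).erase 0 := by
      by_contra hnd
      have h1 := hF _ (Finset.mem_insert_self _ _)
      simp only [nLit] at h1
      rw [CDF_alpha_none F g h _ (by exact hnd)] at h1
      cases h1
    have h1 := hF _ (Finset.mem_insert_self _ _)
    have h2 := hF _ (Finset.mem_insert.mpr (Or.inr (Finset.mem_singleton_self _)))
    simp only [nLit] at h1 h2
    rw [CDF_alpha_R F g h u v hmemu] at h1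
    rw [CDF_alpha_R F g h u v' hmemu] at h2
    simp at h1 h2
    exact hne (h1.trans h2.symm)
  -- (A9)
  · obtain ⟨u, huA, rfl⟩ := hC
    have hmemu : u ∈ (pdom g).erase 0 := by
      by_contra hnd
      have h1 := hF _ (Finset.mem_insert_self _ _)
      simp only [nLit] at h1
      rw [CDF_alpha_none F g h _ (by exact hnd)] at h1
      cases h1
    obtain ⟨hpair, ⟨hu1, hu2⟩, hx1, hx2⟩ := hdomg u hmemu
    have h1 := hF _ (Finset.mem_insert_self _ _)
    have h2 := hF _ (Finset.mem_insert.mpr (Or.inr (Finset.mem_singleton_self _)))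
    simp only [nLit] at h1 h2
    rw [CDF_alpha_I F g h u 0 hmemu] at h1
    rw [CDF_alpha_V F g h u 0 hmemu] at h2
    simp at h1 h2
    by_cases hc : levelOf F.n (papp g u) = F.n
    · have := (Finset.mem_Icc.mp (CDF_If_leaf F hWF hunsat _ hx1 hx2 hc).1).1
      omega
    · have hts := CDF_tree_struct F.n (papp g u) hx1 hx2
      rw [CDF_Vf F _ hx1 hx2, if_pos (by omega)] at h2
      omega
  -- (A10)
  · obtain ⟨u, huA, rfl⟩ := hC
    have hmemu : u ∈ (pdom g).erase 0 := by
      by_contra hnd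
      have h1 := hF _ (Finset.mem_insert_self _ _)
      simp only [pLit] at h1
      rw [CDF_alpha_none F g h _ (by exact hnd)] at h1
      cases h1
    obtain ⟨hpair, ⟨hu1, hu2⟩, hx1, hx2⟩ := hdomg u hmemu
    have h1 := hF _ (Finset.mem_insert_self _ _)
    have h2 := hF _ (Finset.mem_insert.mpr (Or.inr (Finset.mem_singleton_self _)))
    simp only [pLit] at h1 h2
    rw [CDF_alpha_I F g h u 0 hmemu] at h1
    rw [CDF_alpha_V F g h u 0 hmemu] at h2
    simp at h1 h2
    by_cases hc : levelOf F.n (papp g u) = F.n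
    · rw [CDF_Vf F _ hx1 hx2, if_neg (by omega)] at h2
      omega
    · rw [CDF_If F _ hx1 hx2, if_neg hc] at h1
      omega
  -- (A11)
  · obtain ⟨u, huA, rfl⟩ := hC
    have hmemu : u ∈ (pdom g).erase 0 := by
      by_contra hnd
      have h1 := hF _ (Finset.mem_insert_self _ _)
      simp only [nLit] at h1
      rw [CDF_alpha_none F g h _ (by exact hnd)] at h1
      cases h1
    obtain ⟨hpair, ⟨hu1, hu2⟩, hx1, hx2⟩ := hdomg u hmemu
    have h1 := hF _ (Finset.mem_insert_self _ _)
    have h2 := hF _ (Finset.mem_insert.mpr (Or.inr (Finset.mem_singleton_self _)))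
    simp only [nLit] at h1 h2
    rw [CDF_alpha_I F g h u 0 hmemu] at h1
    rw [CDF_alpha_L F g h u 0 hmemu] at h2
    simp at h1 h2
    have hts := CDF_tree_struct F.n (papp g u) hx1 hx2
    have hlt : levelOf F.n (papp g u) < F.n := by
      by_contra hc
      have hc' : levelOf F.n (papp g u) = F.n := by omega
      have := (Finset.mem_Icc.mp (CDF_If_leaf F hWF hunsat _ hx1 hx2 hc').1).1
      omega
    have hLeq := CDF_Lf_eq F _ hx1 hx2 hlt
    have hcs := CDF_child_struct F.n (levelOf F.n (papp g u)) (valOf F.n (papp g u)) 0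
      hlt hts.2.1 (by norm_num)
    have hy1 : 1 ≤ (fullTree F).Lf (papp g u) := by rw [hLeq]; exact hcs.1
    have hpv := CDF_pinv_app h _ (hLmem u hmemu)
    rw [← h2] at hpv
    have := hhf (0, (fullTree F).Lf (papp g u)) hpv (0, 0) hh0 rfl
    simp at this
    omega
  -- (A12)
  · obtain ⟨u, huA, rfl⟩ := hC
    have hmemu : u ∈ (pdom g).erase 0 := by
      by_contra hnd
      have h1 := hF _ (Finset.mem_insert_self _ _)
      simp only [nLit] at h1
      rw [CDF_alpha_none F g h _ (by exact hnd)] at h1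
      cases h1
    obtain ⟨hpair, ⟨hu1, hu2⟩, hx1, hx2⟩ := hdomg u hmemu
    have h1 := hF _ (Finset.mem_insert_self _ _)
    have h2 := hF _ (Finset.mem_insert.mpr (Or.inr (Finset.mem_singleton_self _)))
    simp only [nLit] at h1 h2
    rw [CDF_alpha_I F g h u 0 hmemu] at h1
    rw [CDF_alpha_R F g h u 0 hmemu] at h2
    simp at h1 h2
    have hts := CDF_tree_struct F.n (papp g u) hx1 hx2
    have hlt : levelOf F.n (papp g u) < F.n := by
      by_contra hc
      have hc' : levelOf F.n (papp g u) = F.n := by omega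
      have := (Finset.mem_Icc.mp (CDF_If_leaf F hWF hunsat _ hx1 hx2 hc').1).1
      omega
    have hLeq := CDF_Rf_eq F _ hx1 hx2 hlt
    have hcs := CDF_child_struct F.n (levelOf F.n (papp g u)) (valOf F.n (papp g u)) 1
      hlt hts.2.1 (by norm_num)
    have hy1 : 1 ≤ (fullTree F).Rf (papp g u) := by rw [hLeq]; exact hcs.1
    have hpv := CDF_pinv_app h _ (hRmem u hmemu)
    rw [← h2] at hpv
    have := hhf (0, (fullTree F).Rf (papp g u)) hpv (0, 0) hh0 rfl
    simp at this
    omega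
  -- (A13)
  · obtain ⟨u, huA, v, hvA, huv, rfl⟩ := hC
    obtain ⟨hv1, hv2⟩ := Finset.mem_Icc.mp hvA
    have hmemu : u ∈ (pdom g).erase 0 := by
      by_contra hnd
      have h1 := hF _ (Finset.mem_singleton_self _)
      simp only [nLit] at h1
      rw [CDF_alpha_none F g h _ (by exact hnd)] at h1
      cases h1
    obtain ⟨hpair, ⟨hu1, hu2⟩, hx1, hx2⟩ := hdomg u hmemu
    have h1 := hF _ (Finset.mem_singleton_self _)
    simp only [nLit] at h1
    rw [CDF_alpha_L F g h u v hmemu] at h1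
    simp at h1
    have hpv : (v, (fullTree F).Lf (papp g u)) ∈ h := by
      rw [h1]; exact CDF_pinv_app h _ (hLmem u hmemu)
    have hts := CDF_tree_struct F.n (papp g u) hx1 hx2
    by_cases hc : levelOf F.n (papp g u) < F.n
    · have hLeq := CDF_Lf_eq F _ hx1 hx2 hc
      have hcs := CDF_child_struct F.n (levelOf F.n (papp g u)) (valOf F.n (papp g u)) 0
        hc hts.2.1 (by norm_num)
      have hlt := CDF_block_lt F s w hn hw hlow hhigh h hhH u v (papp g u)
        ((fullTree F).Lf (papp g u)) hu1 hu2 hv1 hv2 (hGH u hmemu) hpv hx1 hx2 hc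
        (by rw [hLeq]; exact hcs.1) (by rw [hLeq]; exact hcs.2.1)
        (by rw [hLeq]; exact hcs.2.2.1)
      omega
    · have hy0 : (fullTree F).Lf (papp g u) = 0 := by
        rw [CDF_Lf F _ hx1 hx2, if_neg hc]
      rw [hy0] at hpv
      have := hhinj (v, 0) hpv (0, 0) hh0 rfl
      simp at this
      omega
  -- (A14)
  · obtain ⟨u, huA, v, hvA, huv, rfl⟩ := hC
    obtain ⟨hv1, hv2⟩ := Finset.mem_Icc.mp hvA
    have hmemu : u ∈ (pdom g).erase 0 := by
      by_contra hnd
      have h1 := hF _ (Finset.mem_singleton_self _)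
      simp only [nLit] at h1
      rw [CDF_alpha_none F g h _ (by exact hnd)] at h1
      cases h1
    obtain ⟨hpair, ⟨hu1, hu2⟩, hx1, hx2⟩ := hdomg u hmemu
    have h1 := hF _ (Finset.mem_singleton_self _)
    simp only [nLit] at h1
    rw [CDF_alpha_R F g h u v hmemu] at h1
    simp at h1
    have hpv : (v, (fullTree F).Rf (papp g u)) ∈ h := by
      rw [h1]; exact CDF_pinv_app h _ (hRmem u hmemu)
    have hts := CDF_tree_struct F.n (papp g u) hx1 hx2
    by_cases hc : levelOf F.n (papp g u) < F.n
    · have hLeq := CDF_Rf_eq F _ hx1 hx2 hc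
      have hcs := CDF_child_struct F.n (levelOf F.n (papp g u)) (valOf F.n (papp g u)) 1
        hc hts.2.1 (by norm_num)
      have hlt := CDF_block_lt F s w hn hw hlow hhigh h hhH u v (papp g u)
        ((fullTree F).Rf (papp g u)) hu1 hu2 hv1 hv2 (hGH u hmemu) hpv hx1 hx2 hc
        (by rw [hLeq]; exact hcs.1) (by rw [hLeq]; exact hcs.2.1)
        (by rw [hLeq]; exact hcs.2.2.1)
      omega
    · have hy0 : (fullTree F).Rf (papp g u) = 0 := by
        rw [CDF_Rf F _ hx1 hx2, if_neg hc]
      rw [hy0] at hpv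
      have := hhinj (v, 0) hpv (0, 0) hh0 rfl
      simp at this
      omega
  -- (A15)
  · obtain ⟨u, huA, v, hvA, i, hiI, rfl⟩ := hC
    obtain ⟨hi1, hi2⟩ := Finset.mem_Icc.mp hiI
    have hmemu : u ∈ (pdom g).erase 0 := by
      by_contra hnd
      have h1 := hF _ (Finset.mem_insert_self _ _)
      simp only [nLit] at h1
      rw [CDF_alpha_none F g h _ (by exact hnd)] at h1
      cases h1
    have hmemv : v ∈ (pdom g).erase 0 := by
      by_contra hnd
      have h1 := hF (pLit (RefVar.D v i false)) (by simp)
      simp only [pLit] at h1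
      rw [CDF_alpha_none F g h _ (by exact hnd)] at h1
      cases h1
    obtain ⟨hpair, ⟨hu1, hu2⟩, hx1, hx2⟩ := hdomg u hmemu
    obtain ⟨hpairv, ⟨hv1, hv2⟩, hxv1, hxv2⟩ := hdomg v hmemv
    have h1 := hF _ (Finset.mem_insert_self _ _)
    have h2 := hF (nLit (RefVar.V u i)) (by simp)
    have h3 := hF (pLit (RefVar.D v i false)) (by simp)
    simp only [nLit, pLit] at h1 h2 h3
    rw [CDF_alpha_L F g h u v hmemu] at h1
    rw [CDF_alpha_V F g h u i hmemu] at h2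
    rw [CDF_alpha_D F g h v i false hmemv] at h3
    simp at h1 h2 h3
    have hts := CDF_tree_struct F.n (papp g u) hx1 hx2
    have hlt : levelOf F.n (papp g u) < F.n ∧ i = levelOf F.n (papp g u) + 1 := by
      rw [CDF_Vf F _ hx1 hx2] at h2
      split_ifs at h2 with hc
      · exact ⟨hc, h2.symm⟩
      · omega
    have hpv : (v, (fullTree F).Lf (papp g u)) ∈ h := by
      rw [h1]; exact CDF_pinv_app h _ (hLmem u hmemu)
    have hgvy : papp g v = (fullTree F).Lf (papp g u) :=
      hhf (v, papp g v) (hgh hpairv) (v, (fullTree F).Lf (papp g u)) hpv rfl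
    have hLeq := CDF_Lf_eq F _ hx1 hx2 hlt.1
    have hcs := CDF_child_struct F.n (levelOf F.n (papp g u)) (valOf F.n (papp g u)) 0
      hlt.1 hts.2.1 (by norm_num)
    have hdig : digitOf F.n ((fullTree F).Lf (papp g u)) i = false := by
      rw [digitOf, hLeq, hcs.2.2.1, hcs.2.2.2, hlt.2, Nat.sub_self,
        CDF_testBit_two_mul_add_zero _ 0 (by norm_num)]
      simp
    have hDr : (fullTree F).Dr ((fullTree F).Lf (papp g u)) i false = true := by
      rw [CDF_Dr F _ i false (by rw [hLeq]; exact hcs.1) (by rw [hLeq]; exact hcs.2.1)]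
      refine ⟨by omega, ?_, hdig⟩
      rw [hLeq, hcs.2.2.1]
      omega
    rw [hgvy, hDr] at h3
    exact Bool.noConfusion h3
  -- (A16)
  · obtain ⟨u, huA, v, hvA, i, hiI, rfl⟩ := hC
    obtain ⟨hi1, hi2⟩ := Finset.mem_Icc.mp hiI
    have hmemu : u ∈ (pdom g).erase 0 := by
      by_contra hnd
      have h1 := hF _ (Finset.mem_insert_self _ _)
      simp only [nLit] at h1
      rw [CDF_alpha_none F g h _ (by exact hnd)] at h1
      cases h1
    have hmemv : v ∈ (pdom g).erase 0 := by
      by_contra hnd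
      have h1 := hF (pLit (RefVar.D v i true)) (by simp)
      simp only [pLit] at h1
      rw [CDF_alpha_none F g h _ (by exact hnd)] at h1
      cases h1
    obtain ⟨hpair, ⟨hu1, hu2⟩, hx1, hx2⟩ := hdomg u hmemu
    obtain ⟨hpairv, ⟨hv1, hv2⟩, hxv1, hxv2⟩ := hdomg v hmemv
    have h1 := hF _ (Finset.mem_insert_self _ _)
    have h2 := hF (nLit (RefVar.V u i)) (by simp)
    have h3 := hF (pLit (RefVar.D v i true)) (by simp)
    simp only [nLit, pLit] at h1 h2 h3
    rw [CDF_alpha_R F g h u v hmemu] at h1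
    rw [CDF_alpha_V F g h u i hmemu] at h2
    rw [CDF_alpha_D F g h v i true hmemv] at h3
    simp at h1 h2 h3
    have hts := CDF_tree_struct F.n (papp g u) hx1 hx2
    have hlt : levelOf F.n (papp g u) < F.n ∧ i = levelOf F.n (papp g u) + 1 := by
      rw [CDF_Vf F _ hx1 hx2] at h2
      split_ifs at h2 with hc
      · exact ⟨hc, h2.symm⟩
      · omega
    have hpv : (v, (fullTree F).Rf (papp g u)) ∈ h := by
      rw [h1]; exact CDF_pinv_app h _ (hRmem u hmemu)
    have hgvy : papp g v = (fullTree F).Rf (papp g u) :=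
      hhf (v, papp g v) (hgh hpairv) (v, (fullTree F).Rf (papp g u)) hpv rfl
    have hLeq := CDF_Rf_eq F _ hx1 hx2 hlt.1
    have hcs := CDF_child_struct F.n (levelOf F.n (papp g u)) (valOf F.n (papp g u)) 1
      hlt.1 hts.2.1 (by norm_num)
    have hdig : digitOf F.n ((fullTree F).Rf (papp g u)) i = true := by
      rw [digitOf, hLeq, hcs.2.2.1, hcs.2.2.2, hlt.2, Nat.sub_self,
        CDF_testBit_two_mul_add_zero _ 1 (by norm_num)]
      simp
    have hDr : (fullTree F).Dr ((fullTree F).Rf (papp g u)) i true = true := by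
      rw [CDF_Dr F _ i true (by rw [hLeq]; exact hcs.1) (by rw [hLeq]; exact hcs.2.1)]
      refine ⟨by omega, ?_, hdig⟩
      rw [hLeq, hcs.2.2.1]
      omega
    rw [hgvy, hDr] at h3
    exact Bool.noConfusion h3
  -- (A17)
  · obtain ⟨u, huA, v, hvA, i, hiI, i', hi'I, b, hne, rfl⟩ := hC
    obtain ⟨hi1, hi2⟩ := Finset.mem_Icc.mp hiI
    obtain ⟨hi'1, hi'2⟩ := Finset.mem_Icc.mp hi'I
    have hmemu : u ∈ (pdom g).erase 0 := by
      by_contra hnd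
      have h1 := hF _ (Finset.mem_insert_self _ _)
      simp only [nLit] at h1
      rw [CDF_alpha_none F g h _ (by exact hnd)] at h1
      cases h1
    have hmemv : v ∈ (pdom g).erase 0 := by
      by_contra hnd
      have h1 := hF (nLit (RefVar.D v i' b)) (by simp)
      simp only [nLit] at h1
      rw [CDF_alpha_none F g h _ (by exact hnd)] at h1
      cases h1
    obtain ⟨hpair, ⟨hu1, hu2⟩, hx1, hx2⟩ := hdomg u hmemu
    obtain ⟨hpairv, ⟨hv1, hv2⟩, hxv1, hxv2⟩ := hdomg v hmemv
    have h1 := hF _ (Finset.mem_insert_self _ _)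
    have h2 := hF (nLit (RefVar.V u i)) (by simp)
    have h3 := hF (nLit (RefVar.D v i' b)) (by simp)
    have h4 := hF (pLit (RefVar.D u i' b)) (by simp)
    simp only [nLit, pLit] at h1 h2 h3 h4
    rw [CDF_alpha_L F g h u v hmemu] at h1
    rw [CDF_alpha_V F g h u i hmemu] at h2
    rw [CDF_alpha_D F g h v i' b hmemv] at h3
    rw [CDF_alpha_D F g h u i' b hmemu] at h4
    simp at h1 h2 h3 h4
    have hts := CDF_tree_struct F.n (papp g u) hx1 hx2
    have hlt : levelOf F.n (papp g u) < F.n ∧ i = levelOf F.n (papp g u) + 1 := by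
      rw [CDF_Vf F _ hx1 hx2] at h2
      split_ifs at h2 with hc
      · exact ⟨hc, h2.symm⟩
      · omega
    have hpv : (v, (fullTree F).Lf (papp g u)) ∈ h := by
      rw [h1]; exact CDF_pinv_app h _ (hLmem u hmemu)
    have hgvy : papp g v = (fullTree F).Lf (papp g u) :=
      hhf (v, papp g v) (hgh hpairv) (v, (fullTree F).Lf (papp g u)) hpv rfl
    have hLeq := CDF_Lf_eq F _ hx1 hx2 hlt.1
    have hcs := CDF_child_struct F.n (levelOf F.n (papp g u)) (valOf F.n (papp g u)) 0
      hlt.1 hts.2.1 (by norm_num)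
    rw [hgvy] at h3
    rw [CDF_Dr F _ i' b (by rw [hLeq]; exact hcs.1) (by rw [hLeq]; exact hcs.2.1)] at h3
    obtain ⟨_, h3b, h3d⟩ := h3
    have hi'le : i' ≤ levelOf F.n (papp g u) := by
      rw [hLeq, hcs.2.2.1] at h3b
      omega
    have hdig : digitOf F.n (papp g u) i' = b := by
      rw [digitOf]
      rw [digitOf, hLeq, hcs.2.2.1, hcs.2.2.2] at h3d
      have he : levelOf F.n (papp g u) + 1 - i' = (levelOf F.n (papp g u) - i') + 1 := by
        omega
      rw [he, CDF_testBit_two_mul_add _ 0 _ (by norm_num)] at h3d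
      exact h3d
    have hDr : (fullTree F).Dr (papp g u) i' b = true := by
      rw [CDF_Dr F _ i' b hx1 hx2]
      exact ⟨by omega, hi'le, hdig⟩
    rw [hDr] at h4
    exact Bool.noConfusion h4
  -- (A18)
  · obtain ⟨u, huA, v, hvA, i, hiI, i', hi'I, b, hne, rfl⟩ := hC
    obtain ⟨hi1, hi2⟩ := Finset.mem_Icc.mp hiI
    obtain ⟨hi'1, hi'2⟩ := Finset.mem_Icc.mp hi'I
    have hmemu : u ∈ (pdom g).erase 0 := by
      by_contra hnd
      have h1 := hF _ (Finset.mem_insert_self _ _)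
      simp only [nLit] at h1
      rw [CDF_alpha_none F g h _ (by exact hnd)] at h1
      cases h1
    have hmemv : v ∈ (pdom g).erase 0 := by
      by_contra hnd
      have h1 := hF (nLit (RefVar.D v i' b)) (by simp)
      simp only [nLit] at h1
      rw [CDF_alpha_none F g h _ (by exact hnd)] at h1
      cases h1
    obtain ⟨hpair, ⟨hu1, hu2⟩, hx1, hx2⟩ := hdomg u hmemu
    obtain ⟨hpairv, ⟨hv1, hv2⟩, hxv1, hxv2⟩ := hdomg v hmemv
    have h1 := hF _ (Finset.mem_insert_self _ _)
    have h2 := hF (nLit (RefVar.V u i)) (by simp)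
    have h3 := hF (nLit (RefVar.D v i' b)) (by simp)
    have h4 := hF (pLit (RefVar.D u i' b)) (by simp)
    simp only [nLit, pLit] at h1 h2 h3 h4
    rw [CDF_alpha_R F g h u v hmemu] at h1
    rw [CDF_alpha_V F g h u i hmemu] at h2
    rw [CDF_alpha_D F g h v i' b hmemv] at h3
    rw [CDF_alpha_D F g h u i' b hmemu] at h4
    simp at h1 h2 h3 h4
    have hts := CDF_tree_struct F.n (papp g u) hx1 hx2
    have hlt : levelOf F.n (papp g u) < F.n ∧ i = levelOf F.n (papp g u) + 1 := by
      rw [CDF_Vf F _ hx1 hx2] at h2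
      split_ifs at h2 with hc
      · exact ⟨hc, h2.symm⟩
      · omega
    have hpv : (v, (fullTree F).Rf (papp g u)) ∈ h := by
      rw [h1]; exact CDF_pinv_app h _ (hRmem u hmemu)
    have hgvy : papp g v = (fullTree F).Rf (papp g u) :=
      hhf (v, papp g v) (hgh hpairv) (v, (fullTree F).Rf (papp g u)) hpv rfl
    have hLeq := CDF_Rf_eq F _ hx1 hx2 hlt.1
    have hcs := CDF_child_struct F.n (levelOf F.n (papp g u)) (valOf F.n (papp g u)) 1
      hlt.1 hts.2.1 (by norm_num)
    rw [hgvy] at h3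
    rw [CDF_Dr F _ i' b (by rw [hLeq]; exact hcs.1) (by rw [hLeq]; exact hcs.2.1)] at h3
    obtain ⟨_, h3b, h3d⟩ := h3
    have hi'le : i' ≤ levelOf F.n (papp g u) := by
      rw [hLeq, hcs.2.2.1] at h3b
      omega
    have hdig : digitOf F.n (papp g u) i' = b := by
      rw [digitOf]
      rw [digitOf, hLeq, hcs.2.2.1, hcs.2.2.2] at h3d
      have he : levelOf F.n (papp g u) + 1 - i' = (levelOf F.n (papp g u) - i') + 1 := by
        omega
      rw [he, CDF_testBit_two_mul_add _ 1 _ (by norm_num)] at h3d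
      exact h3d
    have hDr : (fullTree F).Dr (papp g u) i' b = true := by
      rw [CDF_Dr F _ i' b hx1 hx2]
      exact ⟨by omega, hi'le, hdig⟩
    rw [hDr] at h4
    exact Bool.noConfusion h4
  -- (A19)
  · obtain ⟨u, huA, j, hjI, i, b, hib, rfl⟩ := hC
    obtain ⟨hj1, hj2⟩ := Finset.mem_Icc.mp hjI
    have hmemu : u ∈ (pdom g).erase 0 := by
      by_contra hnd
      have h1 := hF _ (Finset.mem_insert_self _ _)
      simp only [nLit] at h1
      rw [CDF_alpha_none F g h _ (by exact hnd)] at h1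
      cases h1
    obtain ⟨hpair, ⟨hu1, hu2⟩, hx1, hx2⟩ := hdomg u hmemu
    have h1 := hF _ (Finset.mem_insert_self _ _)
    have h2 := hF (pLit (RefVar.D u i b)) (by simp)
    simp only [nLit, pLit] at h1 h2
    rw [CDF_alpha_I F g h u j hmemu] at h1
    rw [CDF_alpha_D F g h u i b hmemu] at h2
    simp at h1 h2
    have hts := CDF_tree_struct F.n (papp g u) hx1 hx2
    have hc : levelOf F.n (papp g u) = F.n := by
      by_contra hc
      rw [CDF_If F _ hx1 hx2, if_neg hc] at h1
      omega
    have hleaf := CDF_If_leaf F hWF hunsat _ hx1 hx2 hc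
    rw [h1] at hleaf
    have hmem := hleaf.2 hib
    rw [leafClause, Finset.mem_image] at hmem
    obtain ⟨i0, hi0, heq⟩ := hmem
    have hii : i0 = i ∧ digitOf F.n (papp g u) i0 = b := by
      constructor
      · exact congrArg Prod.fst heq
      · exact congrArg Prod.snd heq
    obtain ⟨hi0I1, hi0I2⟩ := Finset.mem_Icc.mp hi0
    have hDr : (fullTree F).Dr (papp g u) i b = true := by
      rw [CDF_Dr F _ i b hx1 hx2]
      refine ⟨by omega, by omega, ?_⟩
      rw [← hii.1]
      exact hii.2
    rw [hDr] at h2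
    exact Bool.noConfusion h2
  -- (A20)
  · obtain ⟨u, huA, i, hiI, rfl⟩ := hC
    have hmemu : u ∈ (pdom g).erase 0 := by
      by_contra hnd
      have h1 := hF _ (Finset.mem_insert_self _ _)
      simp only [nLit] at h1
      rw [CDF_alpha_none F g h _ (by exact hnd)] at h1
      cases h1
    obtain ⟨hpair, ⟨hu1, hu2⟩, hx1, hx2⟩ := hdomg u hmemu
    have h1 := hF _ (Finset.mem_insert_self _ _)
    have h2 := hF (nLit (RefVar.D u i true)) (by simp)
    simp only [nLit] at h1 h2
    rw [CDF_alpha_D F g h u i false hmemu] at h1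
    rw [CDF_alpha_D F g h u i true hmemu] at h2
    simp at h1 h2
    rw [CDF_Dr F _ i false hx1 hx2] at h1
    rw [CDF_Dr F _ i true hx1 hx2] at h2
    obtain ⟨_, _, hd1⟩ := h1
    obtain ⟨_, _, hd2⟩ := h2
    rw [hd1] at hd2
    exact Bool.noConfusion hd2
  -- (A21)
  · obtain ⟨i, hiI, b, rfl⟩ := hC
    obtain ⟨hi1, hi2⟩ := Finset.mem_Icc.mp hiI
    have hmemu : s ∈ (pdom g).erase 0 := by
      by_contra hnd
      have h1 := hF _ (Finset.mem_singleton_self _)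
      simp only [nLit] at h1
      rw [CDF_alpha_none F g h _ (by exact hnd)] at h1
      cases h1
    obtain ⟨hpair, ⟨hu1, hu2⟩, hx1, hx2⟩ := hdomg s hmemu
    have h1 := hF _ (Finset.mem_singleton_self _)
    simp only [nLit] at h1
    rw [CDF_alpha_D F g h s i b hmemu] at h1
    simp at h1
    obtain ⟨hk1, hk2⟩ := CDF_kOf w hw
    have hpow : 2^(kOf w+1) = 2 * 2^(kOf w) := by ring
    have h6w : 6 * w ≤ s := le_trans (by nlinarith) hlow
    have hsB0 : s ∈ Bblk F.n s w 0 := by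
      rw [CDF_Bblk0_iff]
      omega
    have hx_eq : papp g s = tmap F.n s s := hg3 (s, papp g s) hpair hsB0
    have hxval : papp g s = 2^(F.n+1) - 1 := by
      rw [hx_eq, tmap]
      omega
    have hlev : levelOf F.n (papp g s) = 0 := by
      rw [hxval, levelOf]
      have he : 2^(F.n+1) - (2^(F.n+1) - 1) = 1 := by omega
      rw [he]
      exact Nat.log_one_right 2
    rw [CDF_Dr F _ i b hx1 hx2, hlev] at h1
    omega
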